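/- arXiv:1511.01172 — 4 statements merged into one kernel-verified Lean document; each statement's English description precedes it below -/
import Mathlib

section
/- Let z be a nonzero integer and let π be the group with presentation ⟨a, x, y | xax⁻¹a⁻¹, yay⁻¹a⁻¹, xyx⁻¹y⁻¹a^{−z}⟩. Then the center of π is the infinite cyclic subgroup generated by a. -/
/-!
Every element of `π` has a unique normal form `a^k x^m y^n`. Since `a` commutes with `x` and `y`
and `⁅x, y⁆ = a^z`, one has `y^n x^m = a^(-z n m) x^m y^n`, so the normal forms multiply by the
rule `(k, m, n) (k', m', n') = (k + k' - z n m', m + m', n + n')`, and these triples form a group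
isomorphic to `π`. There `(k, m, n)` commutes with `x` and `y` exactly when `z m = z n = 0`;
for `z ≠ 0` this leaves the powers `(k, 0, 0)` of `a`, which has infinite order.
-/

/-- The relators of the presentation
`⟨a, x, y | xax⁻¹a⁻¹, yay⁻¹a⁻¹, xyx⁻¹y⁻¹a^{-z}⟩`, where the generators
`a, x, y` correspond to `0, 1, 2 : Fin 3`. -/
def torusBundleRels (z : ℤ) : Set (FreeGroup (Fin 3)) :=
  { FreeGroup.of 1 * FreeGroup.of 0 * (FreeGroup.of 1)⁻¹ * (FreeGroup.of 0)⁻¹,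
    FreeGroup.of 2 * FreeGroup.of 0 * (FreeGroup.of 2)⁻¹ * (FreeGroup.of 0)⁻¹,
    FreeGroup.of 1 * FreeGroup.of 2 * (FreeGroup.of 1)⁻¹ * (FreeGroup.of 2)⁻¹ *
      FreeGroup.of 0 ^ (-z) }

open scoped commutatorElement

theorem zpow_mul_zpow_eq_of_commutatorElement_eq {G : Type*} [Group G] {c X Y : G}
    (hcX : Commute c X) (hcY : Commute c Y) (h : ⁅X, Y⁆ = c) (m n : ℤ) :
    Y ^ n * X ^ m = c ^ (-(n * m)) * X ^ m * Y ^ n := by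
  have hXY : SemiconjBy X Y (c * Y) := by
    rw [SemiconjBy, ← h, commutatorElement_def]; group
  have hXYn : X * Y ^ n = c ^ n * Y ^ n * X := by
    simpa only [hcY.mul_zpow] using (hXY.zpow_right n).eq
  have hYnX : SemiconjBy (Y ^ n) X (c ^ (-n) * X) := by
    rw [SemiconjBy, mul_assoc, hXYn, zpow_neg]; group
  rw [(hYnX.zpow_right m).eq, (hcX.zpow_left _).mul_zpow, ← zpow_mul, neg_mul]

-- `⟨k, m, n⟩` stands for the normal form `a^k x^m y^n`.
@[ext] structure TwistedHeisenberg (z : ℤ) where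
  k : ℤ
  m : ℤ
  n : ℤ

namespace TwistedHeisenberg

variable {z : ℤ}

instance : Mul (TwistedHeisenberg z) :=
  ⟨fun g h => ⟨g.k + h.k - z * g.n * h.m, g.m + h.m, g.n + h.n⟩⟩

instance : One (TwistedHeisenberg z) := ⟨⟨0, 0, 0⟩⟩

instance : Inv (TwistedHeisenberg z) := ⟨fun g => ⟨-g.k - z * g.n * g.m, -g.m, -g.n⟩⟩

@[simp] lemma mul_k (g h : TwistedHeisenberg z) : (g * h).k = g.k + h.k - z * g.n * h.m := rfl
@[simp] lemma mul_m (g h : TwistedHeisenberg z) : (g * h).m = g.m + h.m := rfl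
@[simp] lemma mul_n (g h : TwistedHeisenberg z) : (g * h).n = g.n + h.n := rfl
@[simp] lemma one_k : (1 : TwistedHeisenberg z).k = 0 := rfl
@[simp] lemma one_m : (1 : TwistedHeisenberg z).m = 0 := rfl
@[simp] lemma one_n : (1 : TwistedHeisenberg z).n = 0 := rfl
@[simp] lemma inv_k (g : TwistedHeisenberg z) : g⁻¹.k = -g.k - z * g.n * g.m := rfl
@[simp] lemma inv_m (g : TwistedHeisenberg z) : g⁻¹.m = -g.m := rfl
@[simp] lemma inv_n (g : TwistedHeisenberg z) : g⁻¹.n = -g.n := rfl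

instance : Group (TwistedHeisenberg z) where
  mul_assoc f g h := by ext <;> simp <;> ring
  one_mul g := by ext <;> simp
  mul_one g := by ext <;> simp
  inv_mul_cancel g := by ext <;> simp; ring

lemma mk_zpow_of_mul_eq_zero {k m n : ℤ} (h : n * m = 0) (t : ℤ) :
    (⟨k, m, n⟩ : TwistedHeisenberg z) ^ t = ⟨t * k, t * m, t * n⟩ := by
  induction t using Int.induction_on with
  | zero => ext <;> simp
  | succ t ih =>
    rw [zpow_add_one, ih]
    ext
    · simp only [mul_k]; linear_combination (-z * t) * h
    all_goals simp only [mul_m, mul_n]; ring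
  | pred t ih =>
    rw [zpow_sub_one, ih]
    ext
    · simp only [mul_k, inv_k, inv_m]; linear_combination (-z * (t + 1)) * h
    all_goals simp only [mul_m, mul_n, inv_m, inv_n]; ring

lemma mk_eq_zpow_mul (k m n : ℤ) :
    (⟨k, m, n⟩ : TwistedHeisenberg z) =
      ⟨1, 0, 0⟩ ^ k * (⟨0, 1, 0⟩ : TwistedHeisenberg z) ^ m * ⟨0, 0, 1⟩ ^ n := by
  simp only [mk_zpow_of_mul_eq_zero (zero_mul _), mk_zpow_of_mul_eq_zero (mul_zero _)]
  ext <;> simp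

lemma mem_center_iff (hz : z ≠ 0) {g : TwistedHeisenberg z} :
    g ∈ Subgroup.center (TwistedHeisenberg z) ↔ g.m = 0 ∧ g.n = 0 := by
  rw [Subgroup.mem_center_iff]
  constructor
  · intro hg
    have hx := congrArg k (hg ⟨0, 1, 0⟩)
    have hy := congrArg k (hg ⟨0, 0, 1⟩)
    simp only [mul_k] at hx hy
    constructor
    · exact (mul_eq_zero.mp (by linarith : z * g.m = 0)).resolve_left hz
    · exact (mul_eq_zero.mp (by linarith : z * g.n = 0)).resolve_left hz
  · rintro ⟨hm, hn⟩ h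
    ext <;> simp [hm, hn, add_comm]

lemma center_eq_zpowers (hz : z ≠ 0) :
    Subgroup.center (TwistedHeisenberg z) = Subgroup.zpowers ⟨1, 0, 0⟩ := by
  ext g
  simp only [mem_center_iff hz, Subgroup.mem_zpowers_iff, mk_zpow_of_mul_eq_zero (zero_mul _)]
  constructor
  · rintro ⟨hm, hn⟩
    exact ⟨g.k, by ext <;> simp [hm, hn]⟩
  · rintro ⟨t, rfl⟩
    simp

lemma not_isOfFinOrder : ¬ IsOfFinOrder (⟨1, 0, 0⟩ : TwistedHeisenberg z) := by
  refine injective_zpow_iff_not_isOfFinOrder.mp fun s t hst => ?_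
  simpa [mk_zpow_of_mul_eq_zero] using congrArg k hst

section lift

variable {G : Type*} [Group G] {A X Y : G}

def lift (hAX : Commute A X) (hAY : Commute A Y) (hXY : ⁅X, Y⁆ = A ^ z) :
    TwistedHeisenberg z →* G where
  toFun g := A ^ g.k * X ^ g.m * Y ^ g.n
  map_one' := by simp
  map_mul' g h := by
    have hYX := zpow_mul_zpow_eq_of_commutatorElement_eq (hAX.zpow_left z) (hAY.zpow_left z)
      hXY h.m g.n
    have hAhX := (hAX.zpow_zpow h.k g.m).symm
    have hAhY := (hAY.zpow_zpow h.k g.n).symm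
    have hBX := ((hAX.zpow_left z).zpow_zpow (-(g.n * h.m)) g.m).symm
    calc A ^ (g * h).k * X ^ (g * h).m * Y ^ (g * h).n
        = A ^ g.k * A ^ h.k * (X ^ g.m * ((A ^ z) ^ (-(g.n * h.m)) * X ^ h.m * Y ^ g.n)) *
            Y ^ h.n := by
          simp only [mul_k, mul_m, mul_n, mul_assoc, hBX.left_comm]; group
      _ = A ^ g.k * X ^ g.m * Y ^ g.n * (A ^ h.k * X ^ h.m * Y ^ h.n) := by
          simp only [← hYX, mul_assoc, hAhX.left_comm, hAhY.left_comm]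

end lift

end TwistedHeisenberg

open TwistedHeisenberg

namespace TorusBundleGroup

variable {z : ℤ}

local notation "𝐚" => (PresentedGroup.of (rels := torusBundleRels z) 0)
local notation "𝐱" => (PresentedGroup.of (rels := torusBundleRels z) 1)
local notation "𝐲" => (PresentedGroup.of (rels := torusBundleRels z) 2)

lemma commute_a_x : Commute 𝐚 𝐱 := by
  have h := PresentedGroup.one_of_mem (rels := torusBundleRels z) (Set.mem_insert _ _)
  simp only [map_mul, map_inv] at h
  exact (commutatorElement_eq_one_iff_commute.mp h).symm

lemma commute_a_y : Commute 𝐚 𝐲 := by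
  have h := PresentedGroup.one_of_mem (rels := torusBundleRels z)
    (Set.mem_insert_of_mem _ (Set.mem_insert _ _))
  simp only [map_mul, map_inv] at h
  exact (commutatorElement_eq_one_iff_commute.mp h).symm

lemma commutatorElement_x_y : ⁅𝐱, 𝐲⁆ = 𝐚 ^ z := by
  have h := PresentedGroup.one_of_mem (rels := torusBundleRels z)
    (Set.mem_insert_of_mem _ (Set.mem_insert_of_mem _ rfl))
  simp only [map_mul, map_inv, map_zpow] at h
  rw [commutatorElement_def, ← inv_inv (𝐚 ^ z), ← zpow_neg]
  exact eq_inv_of_mul_eq_one_left h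

def toTwistedHeisenberg : PresentedGroup (torusBundleRels z) →* TwistedHeisenberg z :=
  PresentedGroup.toGroup (f := ![⟨1, 0, 0⟩, ⟨0, 1, 0⟩, ⟨0, 0, 1⟩]) <| by
    rintro r (rfl | rfl | rfl) <;>
      simp [mk_zpow_of_mul_eq_zero] <;> ext <;> simp

def equivTwistedHeisenberg : PresentedGroup (torusBundleRels z) ≃* TwistedHeisenberg z :=
  MonoidHom.toMulEquiv toTwistedHeisenberg (lift commute_a_x commute_a_y commutatorElement_x_y)
    (PresentedGroup.ext fun i => by fin_cases i <;> simp [toTwistedHeisenberg, lift])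
    (MonoidHom.ext fun g => by simp [toTwistedHeisenberg, lift, ← mk_eq_zpow_mul])

lemma equivTwistedHeisenberg_a : equivTwistedHeisenberg 𝐚 = ⟨1, 0, 0⟩ := by
  simp [equivTwistedHeisenberg, toTwistedHeisenberg]

end TorusBundleGroup

open TorusBundleGroup in
/-- For `z ≠ 0`, the center of `π = ⟨a, x, y | xax⁻¹a⁻¹, yay⁻¹a⁻¹, xyx⁻¹y⁻¹a^{-z}⟩`
is the infinite cyclic subgroup generated by `a`. -/
theorem center_of_torusBundleGroup (z : ℤ) (hz : z ≠ 0) :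
    Subgroup.center (PresentedGroup (torusBundleRels z)) =
      Subgroup.zpowers (PresentedGroup.of (rels := torusBundleRels z) 0)
    ∧ ¬ IsOfFinOrder (PresentedGroup.of (rels := torusBundleRels z) 0) := by
  obtain ⟨e, he⟩ : ∃ e : PresentedGroup (torusBundleRels z) ≃* TwistedHeisenberg z,
      e (PresentedGroup.of 0) = ⟨1, 0, 0⟩ :=
    ⟨equivTwistedHeisenberg, equivTwistedHeisenberg_a⟩
  constructor
  · ext g
    calc g ∈ Subgroup.center _ ↔ e g ∈ Subgroup.center (TwistedHeisenberg z) :=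
          (MulEquivClass.apply_mem_center_iff e).symm
      _ ↔ e g ∈ (Subgroup.zpowers (PresentedGroup.of 0)).map e.toMonoidHom := by
          rw [MonoidHom.map_zpowers, MulEquiv.coe_toMonoidHom, he, center_eq_zpowers hz]
      _ ↔ g ∈ Subgroup.zpowers (PresentedGroup.of 0) := Subgroup.mem_map_iff_mem e.injective
  · rw [← e.injective.isOfFinOrder_iff (f := e.toMonoidHom), MulEquiv.coe_toMonoidHom, he]
    exact not_isOfFinOrder
end

section
/- Let z ≠ 0 and let π be the central extension of Z² by Z with extension class z, presented as ⟨a, x, y | [x,a], [y,a], [x,y]a^{−z}⟩. Then the natural homomorphism Aut(π) → GL₂(Z), induced by the action of automorphisms on π/Z(π) ≅ Z², is surjective. -/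
/-
Writing `a, x, y` for the generators, `a` is central and `⁅x, y⁆ = a ^ z`. Whenever `⁅x, y⁆`
commutes with `x` and `y` one has `⁅x^p y^q, x^r y^s⁆ = ⁅x, y⁆^(ps - qr)`, so every integral
matrix `M` lifts to the endomorphism `a ↦ a^(det M)`, `x ↦ x^M₀₀ y^M₀₁`, `y ↦ x^M₁₀ y^M₁₁`.
Modulo `⟨a⟩` these lifts compose like matrices, so for `M` invertible the composites of the lifts
of `M` and `M⁻¹`, in either order, fix `a` and move `x`, `y` only by central factors. Such a twist
`x ↦ x a^k`, `y ↦ y a^l` is an automorphism, inverse to the twist by `(-k, -l)`; hence the lift of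
`M` is bijective.
-/

open scoped commutatorElement

section Heisenberg

variable {G : Type*} [Group G] {x y : G}

theorem conj_zpow_eq_commutatorElement_zpow_mul (hx : Commute ⁅x, y⁆ x) (n : ℤ) :
    x ^ n * y * x ^ (-n) = ⁅x, y⁆ ^ n * y := by
  have hyx : y * x * y⁻¹ = ⁅x, y⁆⁻¹ * x := by simp only [commutatorElement_def]; group
  have hyxn : y * x ^ (-n) * y⁻¹ = ⁅x, y⁆ ^ n * x ^ (-n) := by
    rw [← conj_zpow, hyx, hx.inv_left.mul_zpow, inv_zpow', neg_neg]
  calc x ^ n * y * x ^ (-n) = x ^ n * (y * x ^ (-n) * y⁻¹) * y := by group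
    _ = ⁅x, y⁆ ^ n * y := by
      rw [hyxn, ← mul_assoc, ← (hx.zpow_zpow n n).eq]; group

theorem zpow_mul_zpow_eq_commutatorElement_zpow_mul (hx : Commute ⁅x, y⁆ x)
    (hy : Commute ⁅x, y⁆ y) (n m : ℤ) :
    x ^ n * y ^ m = ⁅x, y⁆ ^ (n * m) * (y ^ m * x ^ n) := by
  have h : x ^ n * y ^ m * (x ^ n)⁻¹ = ⁅x, y⁆ ^ (n * m) * y ^ m := by
    rw [← conj_zpow, ← zpow_neg, conj_zpow_eq_commutatorElement_zpow_mul hx,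
      ((hy.zpow_left n).mul_zpow m), zpow_mul]
  rw [← mul_assoc, ← h, inv_mul_cancel_right]

theorem zpow_mul_zpow_mul_zpow_mul_zpow (hx : Commute ⁅x, y⁆ x) (hy : Commute ⁅x, y⁆ y)
    (p q r s : ℤ) :
    x ^ p * y ^ q * (x ^ r * y ^ s) = ⁅x, y⁆ ^ (-(r * q)) * (x ^ (p + r) * y ^ (q + s)) := by
  have h : y ^ q * x ^ r = ⁅x, y⁆ ^ (-(r * q)) * (x ^ r * y ^ q) := by
    rw [zpow_mul_zpow_eq_commutatorElement_zpow_mul hx hy, zpow_neg, inv_mul_cancel_left]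
  calc x ^ p * y ^ q * (x ^ r * y ^ s) = x ^ p * (y ^ q * x ^ r) * y ^ s := by group
    _ = _ := by
      rw [h, ← mul_assoc, ← (hx.zpow_zpow _ p).eq]
      group

theorem commutatorElement_zpow_mul_zpow (hx : Commute ⁅x, y⁆ x) (hy : Commute ⁅x, y⁆ y)
    (p q r s : ℤ) :
    ⁅x ^ p * y ^ q, x ^ r * y ^ s⁆ = ⁅x, y⁆ ^ (p * s - q * r) := by
  rw [commutatorElement_def, mul_assoc (x ^ p * y ^ q * _), ← mul_inv_rev,
    zpow_mul_zpow_mul_zpow_mul_zpow hx hy, zpow_mul_zpow_mul_zpow_mul_zpow hx hy, add_comm r,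
    add_comm s]
  group

theorem commutatorElement_mul_mul_of_forall_commute {c d : G} (hc : ∀ g, Commute c g)
    (hd : ∀ g, Commute d g) (g h : G) : ⁅g * c, h * d⁆ = ⁅g, h⁆ := by
  calc ⁅g * c, h * d⁆ = g * (c * (h * d) * c⁻¹) * g⁻¹ * d⁻¹ * h⁻¹ := by
        simp only [commutatorElement_def]; group
    _ = g * h * (d * g⁻¹ * d⁻¹) * h⁻¹ := by rw [(hc _).eq, mul_inv_cancel_right]; group
    _ = ⁅g, h⁆ := by rw [(hd _).eq, mul_inv_cancel_right, commutatorElement_def]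

theorem Commute.zpow_mul_zpow_zpow_mul_zpow_mul_zpow_zpow {X Y : G} (h : Commute X Y)
    (p q r s m n : ℤ) :
    (X ^ p * Y ^ q) ^ m * (X ^ r * Y ^ s) ^ n = X ^ (p * m + r * n) * Y ^ (q * m + s * n) := by
  rw [(h.zpow_zpow p q).mul_zpow, (h.zpow_zpow r s).mul_zpow, ← zpow_mul, ← zpow_mul,
    ← zpow_mul, ← zpow_mul, mul_assoc, ← mul_assoc (Y ^ _), ← (h.zpow_zpow _ _).eq]
  group

end Heisenberg

abbrev TorusBundleGroup (z : ℤ) := PresentedGroup (torusBundleRels z)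

namespace TorusBundleGroup

variable {z : ℤ}

def a : TorusBundleGroup z := PresentedGroup.of 0
def x : TorusBundleGroup z := PresentedGroup.of 1
def y : TorusBundleGroup z := PresentedGroup.of 2

theorem commute_x_a : Commute (x : TorusBundleGroup z) a :=
  commutatorElement_eq_one_iff_commute.mp <| PresentedGroup.one_of_mem (Set.mem_insert _ _)

theorem commute_y_a : Commute (y : TorusBundleGroup z) a :=
  commutatorElement_eq_one_iff_commute.mp <|
    PresentedGroup.one_of_mem (Set.mem_insert_of_mem _ (Set.mem_insert _ _))

theorem commutatorElement_x_y_s2 : ⁅(x : TorusBundleGroup z), (y : TorusBundleGroup z)⁆ = a ^ z := by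
  have h : ⁅(x : TorusBundleGroup z), (y : TorusBundleGroup z)⁆ * a ^ (-z) = 1 :=
    PresentedGroup.one_of_mem (Set.mem_insert_of_mem _ (Set.mem_insert_of_mem _ rfl))
  rwa [zpow_neg, mul_inv_eq_one] at h

theorem commute_a (g : TorusBundleGroup z) : Commute a g := by
  have hg : g ∈ Subgroup.centralizer {a} := by
    refine PresentedGroup.generated_by _ _ (fun i => ?_) g
    rw [Subgroup.mem_centralizer_singleton_iff]
    fin_cases i
    exacts [rfl, commute_x_a.eq, commute_y_a.eq]
  exact (Subgroup.mem_centralizer_singleton_iff.mp hg).symm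

instance : (Subgroup.zpowers (a : TorusBundleGroup z)).Normal where
  conj_mem n hn g := by
    obtain ⟨k, rfl⟩ := hn
    show g * a ^ k * g⁻¹ ∈ _
    rw [← ((commute_a g).zpow_left k).eq, mul_inv_cancel_right]
    exact ⟨k, rfl⟩

variable {G : Type*} [Group G] {a' x' y' : G}

def lift (hxa : Commute x' a') (hya : Commute y' a') (hxy : ⁅x', y'⁆ = a' ^ z) :
    TorusBundleGroup z →* G :=
  PresentedGroup.toGroup (f := ![a', x', y']) <| by
    intro r hr
    simp only [torusBundleRels, Set.mem_insert_iff, Set.mem_singleton_iff] at hr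
    rcases hr with rfl | rfl | rfl <;> simp [← commutatorElement_def,
      commutatorElement_eq_one_iff_commute, hxa, hya, hxy]

@[simp] theorem lift_a (hxa : Commute x' a') (hya : Commute y' a') (hxy : ⁅x', y'⁆ = a' ^ z) :
    lift hxa hya hxy a = a' := PresentedGroup.toGroup.of _

@[simp] theorem lift_x (hxa : Commute x' a') (hya : Commute y' a') (hxy : ⁅x', y'⁆ = a' ^ z) :
    lift hxa hya hxy x = x' := PresentedGroup.toGroup.of _

@[simp] theorem lift_y (hxa : Commute x' a') (hya : Commute y' a') (hxy : ⁅x', y'⁆ = a' ^ z) :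
    lift hxa hya hxy y = y' := PresentedGroup.toGroup.of _

theorem hom_ext {f g : TorusBundleGroup z →* G} (ha : f a = g a) (hx : f x = g x)
    (hy : f y = g y) : f = g :=
  PresentedGroup.ext fun i => by fin_cases i; exacts [ha, hx, hy]

def twist (k l : ℤ) : TorusBundleGroup z →* TorusBundleGroup z :=
  lift (a' := a) (x' := x * a ^ k) (y' := y * a ^ l) (commute_a _).symm (commute_a _).symm <| by
    rw [commutatorElement_mul_mul_of_forall_commute (fun g => (commute_a g).zpow_left k)
      (fun g => (commute_a g).zpow_left l), commutatorElement_x_y_s2]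

@[simp] theorem twist_a (k l : ℤ) : twist k l (a : TorusBundleGroup z) = a := lift_a ..
@[simp] theorem twist_x (k l : ℤ) : twist k l (x : TorusBundleGroup z) = x * a ^ k := lift_x ..
@[simp] theorem twist_y (k l : ℤ) : twist k l (y : TorusBundleGroup z) = y * a ^ l := lift_y ..

theorem twist_comp_twist (k l k' l' : ℤ) :
    (twist k l).comp (twist k' l') = (twist (k + k') (l + l') : TorusBundleGroup z →* _) := by
  refine hom_ext ?_ ?_ ?_ <;>
    simp only [MonoidHom.comp_apply, twist_a, twist_x, twist_y, map_mul, map_zpow, mul_assoc,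
      zpow_add]

theorem twist_zero : (twist 0 0 : TorusBundleGroup z →* _) = MonoidHom.id _ :=
  hom_ext (by simp) (by simp) (by simp)

theorem twist_bijective (k l : ℤ) : Function.Bijective (twist k l : TorusBundleGroup z →* _) :=
  (MonoidHom.toMulEquiv (twist k l) (twist (-k) (-l))
    (by rw [twist_comp_twist, neg_add_cancel, neg_add_cancel, twist_zero])
    (by rw [twist_comp_twist, add_neg_cancel, add_neg_cancel, twist_zero])).bijective

def ofMatrix (M : Matrix (Fin 2) (Fin 2) ℤ) : TorusBundleGroup z →* TorusBundleGroup z :=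
  lift (a' := a ^ M.det) (x' := x ^ M 0 0 * y ^ M 0 1) (y' := x ^ M 1 0 * y ^ M 1 1)
    ((commute_a _).zpow_left _).symm ((commute_a _).zpow_left _).symm <| by
      have hc (g : TorusBundleGroup z) : Commute ⁅x, y⁆ g :=
        commutatorElement_x_y_s2 (z := z) ▸ (commute_a g).zpow_left z
      rw [commutatorElement_zpow_mul_zpow (hc _) (hc _), commutatorElement_x_y_s2,
        ← zpow_mul, ← zpow_mul, Matrix.det_fin_two, mul_comm]

variable {M N : Matrix (Fin 2) (Fin 2) ℤ}

@[simp] theorem ofMatrix_a : ofMatrix M (a : TorusBundleGroup z) = a ^ M.det := lift_a ..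
@[simp] theorem ofMatrix_x : ofMatrix M (x : TorusBundleGroup z) = x ^ M 0 0 * y ^ M 0 1 :=
  lift_x ..
@[simp] theorem ofMatrix_y : ofMatrix M (y : TorusBundleGroup z) = x ^ M 1 0 * y ^ M 1 1 :=
  lift_y ..

theorem ofMatrix_one : (ofMatrix 1 : TorusBundleGroup z →* _) = MonoidHom.id _ :=
  hom_ext (by simp) (by simp) (by simp)

theorem commute_mk_x_mk_y :
    Commute (QuotientGroup.mk' (Subgroup.zpowers a) (x : TorusBundleGroup z))
      (QuotientGroup.mk' _ y) := by
  rw [← commutatorElement_eq_one_iff_commute, ← map_commutatorElement, commutatorElement_x_y_s2,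
    QuotientGroup.mk'_apply, QuotientGroup.eq_one_iff]
  exact ⟨z, rfl⟩

theorem mk_a : QuotientGroup.mk' (Subgroup.zpowers a) (a : TorusBundleGroup z) = 1 :=
  (QuotientGroup.eq_one_iff _).mpr (Subgroup.mem_zpowers a)

theorem mk_comp_ofMatrix_comp_ofMatrix :
    (QuotientGroup.mk' (Subgroup.zpowers a)).comp ((ofMatrix N).comp (ofMatrix M)) =
      (QuotientGroup.mk' _).comp (ofMatrix (M * N) : TorusBundleGroup z →* _) := by
  refine hom_ext ?_ ?_ ?_ <;>
    simp only [MonoidHom.comp_apply, ofMatrix_a, ofMatrix_x, ofMatrix_y, map_mul, map_zpow, mk_a,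
      one_zpow, commute_mk_x_mk_y.zpow_mul_zpow_zpow_mul_zpow_mul_zpow_zpow, Matrix.mul_apply,
      Fin.sum_univ_two] <;>
    ring_nf

theorem exists_eq_twist {f : TorusBundleGroup z →* TorusBundleGroup z} (ha : f a = a)
    (hf : (QuotientGroup.mk' (Subgroup.zpowers a)).comp f = QuotientGroup.mk' _) :
    ∃ k l, f = twist k l := by
  have h_eq_mul (g : TorusBundleGroup z) : ∃ k : ℤ, f g = g * a ^ k := by
    have hg : QuotientGroup.mk' _ g = QuotientGroup.mk' _ (f g) := (DFunLike.congr_fun hf g).symm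
    obtain ⟨k, hk⟩ := QuotientGroup.eq.mp hg
    exact ⟨k, inv_mul_eq_iff_eq_mul.mp hk.symm⟩
  obtain ⟨k, hx⟩ := h_eq_mul x
  obtain ⟨l, hy⟩ := h_eq_mul y
  exact ⟨k, l, hom_ext (by rw [ha, twist_a]) (by rw [hx, twist_x]) (by rw [hy, twist_y])⟩

theorem exists_ofMatrix_comp_ofMatrix_eq_twist (h : M * N = 1) :
    ∃ k l, (ofMatrix N).comp (ofMatrix M) = (twist k l : TorusBundleGroup z →* _) := by
  refine exists_eq_twist ?_ ?_
  · rw [MonoidHom.comp_apply, ofMatrix_a, map_zpow, ofMatrix_a, ← zpow_mul, mul_comm,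
      ← Matrix.det_mul, h, Matrix.det_one, zpow_one]
  · rw [mk_comp_ofMatrix_comp_ofMatrix, h, ofMatrix_one, MonoidHom.comp_id]

theorem ofMatrix_bijective (hM : IsUnit M.det) :
    Function.Bijective (ofMatrix M : TorusBundleGroup z →* _) := by
  obtain ⟨k, l, h_inv_comp⟩ := exists_ofMatrix_comp_ofMatrix_eq_twist (M.mul_nonsing_inv hM)
  obtain ⟨k', l', h_comp_inv⟩ := exists_ofMatrix_comp_ofMatrix_eq_twist (M.nonsing_inv_mul hM)
  have h₁ := twist_bijective (z := z) k l
  have h₂ := twist_bijective (z := z) k' l'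
  rw [← h_inv_comp, MonoidHom.coe_comp] at h₁
  rw [← h_comp_inv, MonoidHom.coe_comp] at h₂
  exact ⟨h₁.injective.of_comp, h₂.surjective.of_comp⟩

end TorusBundleGroup

theorem aut_to_GL2_surjective_general (z : ℤ)
    (M : Matrix (Fin 2) (Fin 2) ℤ) (hM : IsUnit M.det) :
    ∃ θ : PresentedGroup (torusBundleRels z) ≃* PresentedGroup (torusBundleRels z),
      θ (PresentedGroup.of 1) *
          ((PresentedGroup.of (rels := torusBundleRels z) 1) ^ (M 0 0) *
            (PresentedGroup.of (rels := torusBundleRels z) 2) ^ (M 0 1))⁻¹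
        ∈ Subgroup.zpowers (PresentedGroup.of (rels := torusBundleRels z) 0) ∧
      θ (PresentedGroup.of 2) *
          ((PresentedGroup.of (rels := torusBundleRels z) 1) ^ (M 1 0) *
            (PresentedGroup.of (rels := torusBundleRels z) 2) ^ (M 1 1))⁻¹
        ∈ Subgroup.zpowers (PresentedGroup.of (rels := torusBundleRels z) 0) := by
  refine ⟨MulEquiv.ofBijective _ (TorusBundleGroup.ofMatrix_bijective hM), ?_, ?_⟩
  · convert (Subgroup.zpowers _).one_mem
    exact mul_inv_eq_one.mpr (TorusBundleGroup.ofMatrix_x (z := z) (M := M))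
  · convert (Subgroup.zpowers _).one_mem
    exact mul_inv_eq_one.mpr (TorusBundleGroup.ofMatrix_y (z := z) (M := M))

/-- For `z ≠ 0` and `π = ⟨a, x, y | [x,a], [y,a], [x,y]a^{-z}⟩`, the natural map
`Aut(π) → GL₂(ℤ)` is surjective: for every invertible integral `2 × 2` matrix `M`
there is an automorphism `θ` of `π` which, modulo the central subgroup `⟨a⟩ = Z(π)`,
sends the class of `x` to `x^{M₀₀} y^{M₀₁}` and the class of `y` to `x^{M₁₀} y^{M₁₁}`;
that is, `θ` induces `M` on `π/Z(π) ≅ ℤ²`. -/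
theorem aut_to_GL2_surjective (z : ℤ) (hz : z ≠ 0)
    (M : Matrix (Fin 2) (Fin 2) ℤ) (hM : IsUnit M.det) :
    ∃ θ : PresentedGroup (torusBundleRels z) ≃* PresentedGroup (torusBundleRels z),
      θ (PresentedGroup.of 1) *
          ((PresentedGroup.of (rels := torusBundleRels z) 1) ^ (M 0 0) *
            (PresentedGroup.of (rels := torusBundleRels z) 2) ^ (M 0 1))⁻¹
        ∈ Subgroup.zpowers (PresentedGroup.of (rels := torusBundleRels z) 0) ∧
      θ (PresentedGroup.of 2) *
          ((PresentedGroup.of (rels := torusBundleRels z) 1) ^ (M 1 0) *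
            (PresentedGroup.of (rels := torusBundleRels z) 2) ^ (M 1 1))⁻¹
        ∈ Subgroup.zpowers (PresentedGroup.of (rels := torusBundleRels z) 0) :=
  aut_to_GL2_surjective_general z M hM
end

section
/- Let π be an infinite group with H¹(π; Zπ) = 0. Then the restriction map Hom_{Zπ}(Zπ, Zπ) → Hom_{Zπ}(Iπ, Zπ) induced by the inclusion Iπ ⊂ Zπ is an isomorphism; consequently the dual module Iπ* = Hom_{Zπ}(Iπ, Zπ) is a free Zπ-module of rank one. -/
/-- The augmentation ring homomorphism `ℤπ → ℤ`. -/
noncomputable def aug (π : Type) [Group π] : MonoidAlgebra ℤ π →+* ℤ :=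
  ((MonoidAlgebra.lift ℤ ℤ π) 1).toRingHom

/-- The augmentation ideal `Iπ = ker(ε : ℤπ → ℤ)`. -/
noncomputable def Ipi (π : Type) [Group π] : Ideal (MonoidAlgebra ℤ π) :=
  RingHom.ker (aug π)

/-- Right multiplication by `x ∈ ℤπ`, as a `ℤπ`-linear map `Iπ → ℤπ`. -/
noncomputable def rmul (π : Type) [Group π] (x : MonoidAlgebra ℤ π) :
    ↥(Ipi π) →ₗ[MonoidAlgebra ℤ π] MonoidAlgebra ℤ π where
  toFun b := (b : MonoidAlgebra ℤ π) * x
  map_add' := by intro b b'; simp [add_mul]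
  map_smul' := by intro r b; simp [smul_eq_mul, mul_assoc]

/-!
Every element of `Iπ` is a `ℤ`-combination of the elements `g - 1`, so a homomorphism
`φ : Iπ → ℤπ` is determined by `c g = φ (g - 1)`, and `gh - 1 = g (h - 1) + (g - 1)` makes `c`
a 1-cocycle of the regular representation. As `H¹(π; ℤπ) = 0`, it is a coboundary
`c g = g x - x = (g - 1) x`, i.e. `φ` is right multiplication by `x`. This `x` is unique: if
`(g - 1) x = 0` for all `g`, the coefficients of `x` are constant, hence zero as `π` is infinite.
Finally `f ↦ f 1` identifies `Hom(ℤπ, ℤπ)` with `ℤπ`, and restricting `f` to `Iπ` is right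
multiplication by `f 1`.
-/

open MonoidAlgebra

namespace MonoidAlgebra

variable {k G : Type*}

theorem eq_zero_of_forall_single_one_mul_eq [Semiring k] [Group G] [Infinite G] {z : k[G]}
    (hz : ∀ g : G, single g 1 * z = z) : z = 0 := by
  have hconst : ∀ g, z.coeff g = z.coeff 1 := fun g => by
    simpa using congr(($(hz g)).coeff g).symm
  obtain ⟨g, hg⟩ := Infinite.exists_notMem_finset z.coeff.support
  have h1 : z.coeff 1 = 0 := (hconst g).symm.trans (Finsupp.notMem_support_iff.1 hg)
  ext g
  simp [hconst g, h1]

end MonoidAlgebra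

theorem Representation.ofMulAction_self_apply_eq_single_mul {k G : Type*} [CommSemiring k]
    [Group G] (g : G) (v : k[G]) :
    Representation.ofMulAction k G G g v = single g 1 * v := by
  rw [← asAlgebraHom_single_one, asAlgebraHom_ofMulAction_smul_eq_mul]

section Augmentation

variable {π : Type} [Group π]

theorem aug_single (g : π) : aug π (single g 1) = 1 := by
  simp [aug, MonoidAlgebra.lift_single]

theorem aug_eq_sum_coeff (b : ℤ[π]) :
    aug π b = ∑ g ∈ b.coeff.support, b.coeff g := by
  simp [aug, MonoidAlgebra.lift_apply, Finsupp.sum]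

theorem sub_aug_smul_one_eq_sum (b : ℤ[π]) :
    b - aug π b • 1 = ∑ g ∈ b.coeff.support, b.coeff g • (single g 1 - 1) := by
  simp only [smul_sub, Finset.sum_sub_distrib, ← Finset.sum_smul, aug_eq_sum_coeff]
  congr 1
  conv_lhs => rw [← b.sum_coeff_single, Finsupp.sum]
  simp [MonoidAlgebra.smul_single]

theorem single_sub_one_mem_Ipi (g : π) : (single g 1 - 1 : ℤ[π]) ∈ Ipi π := by
  simp [Ipi, aug_single]

noncomputable def Ipi.gen (g : π) : Ipi π := ⟨single g 1 - 1, single_sub_one_mem_Ipi g⟩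

theorem Ipi.eq_sum_coeff_smul_gen (b : Ipi π) :
    b = ∑ g ∈ (b : ℤ[π]).coeff.support, (b : ℤ[π]).coeff g • Ipi.gen g := by
  apply Subtype.ext
  have hb : aug π b = 0 := b.2
  simpa [hb, Ipi.gen] using sub_aug_smul_one_eq_sum (b : ℤ[π])

theorem Ipi.linearMap_ext {M : Type*} [AddCommGroup M] [Module ℤ[π] M]
    {φ ψ : Ipi π →ₗ[ℤ[π]] M} (h : ∀ g, φ (Ipi.gen g) = ψ (Ipi.gen g)) :
    φ = ψ := by
  ext b
  rw [Ipi.eq_sum_coeff_smul_gen b]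
  simp only [map_sum, map_zsmul, h]

theorem Ipi.gen_mul (g h : π) :
    Ipi.gen (g * h) = (single g 1 : ℤ[π]) • Ipi.gen h + Ipi.gen g := by
  apply Subtype.ext
  simp [Ipi.gen, mul_sub]

theorem rmul_apply_gen (x : ℤ[π]) (g : π) :
    rmul π x (Ipi.gen g) = single g 1 * x - x := by
  simp [rmul, Ipi.gen, sub_mul]

theorem LinearMap.comp_Ipi_subtype_eq_rmul (f : ℤ[π] →ₗ[ℤ[π]] ℤ[π]) :
    f.comp (Ipi π).subtype = rmul π (f 1) := by
  refine LinearMap.ext fun b => ?_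
  simpa [rmul] using f.map_smul (b : ℤ[π]) 1

theorem rmul_injective [Infinite π] : Function.Injective (rmul π) := by
  intro x y hxy
  rw [← sub_eq_zero]
  refine MonoidAlgebra.eq_zero_of_forall_single_one_mul_eq fun g => ?_
  have hg := congr($hxy (Ipi.gen g))
  simp only [rmul_apply_gen] at hg
  rw [mul_sub, sub_eq_sub_iff_sub_eq_sub.1 hg]

theorem comp_gen_mem_cocycles₁ (φ : Ipi π →ₗ[ℤ[π]] ℤ[π]) :
    (fun g => φ (Ipi.gen g)) ∈ groupCohomology.cocycles₁ (Rep.leftRegular ℤ π) := by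
  rw [groupCohomology.mem_cocycles₁_iff]
  intro g h
  rw [Ipi.gen_mul, map_add, map_smul, smul_eq_mul,
    Representation.ofMulAction_self_apply_eq_single_mul]

theorem rmul_surjective (hH1 : Subsingleton (groupCohomology (Rep.leftRegular ℤ π) 1)) :
    Function.Surjective (rmul π) := by
  intro φ
  obtain ⟨x, hx⟩ :=
    (groupCohomology.H1π_eq_zero_iff ⟨_, comp_gen_mem_cocycles₁ φ⟩).1 (Subsingleton.elim _ _)
  refine ⟨x, Ipi.linearMap_ext fun g => ?_⟩
  rw [rmul_apply_gen, ← Representation.ofMulAction_self_apply_eq_single_mul]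
  exact congr_fun hx g

end Augmentation

/-- Let `π` be an infinite group with `H¹(π; ℤπ) = 0` (cohomology with coefficients
in the left regular representation).  Then the restriction map
`Hom_{ℤπ}(ℤπ, ℤπ) → Hom_{ℤπ}(Iπ, ℤπ)` along the inclusion `Iπ ⊂ ℤπ` is an
isomorphism; consequently `Iπ* = Hom_{ℤπ}(Iπ, ℤπ)` is free of rank one:  every
element of `Iπ*` is of the form `b ↦ b·x` for a unique `x ∈ ℤπ`. -/
theorem restriction_dual_iso (π : Type) [Group π] [Infinite π]
    (hH1 : ∀ x y : groupCohomology (Rep.of (Representation.ofMulAction ℤ π π)) 1,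
      x = y) :
    Function.Bijective
        (fun f : (MonoidAlgebra ℤ π →ₗ[MonoidAlgebra ℤ π] MonoidAlgebra ℤ π) =>
          f.comp (Ipi π).subtype)
    ∧ Function.Bijective (fun x : MonoidAlgebra ℤ π => rmul π x) := by
  have hrmul : Function.Bijective (rmul π) := ⟨rmul_injective, rmul_surjective ⟨hH1⟩⟩
  refine ⟨?_, hrmul⟩
  have hres : (fun f : ℤ[π] →ₗ[ℤ[π]] ℤ[π] => f.comp (Ipi π).subtype) =
      rmul π ∘ LinearMap.ringLmapEquivSelf ℤ[π] ℕ ℤ[π] :=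
    funext LinearMap.comp_Ipi_subtype_eq_rmul
  rw [hres]
  exact hrmul.comp (LinearEquiv.bijective _)
end

section
/- Let π be a group, N a Zπ-module, F a finitely generated free Zπ-module, and (λ, μ) a quadratic form on N ⊕ F. Then λ is even if and only if the restriction of λ to N is even. -/
/-!
Evenness can be checked block by block. If `λ|_N = q_N + q_N*` and `λ|_F = q_F + q_F*`, then
`q((x, f), (y, g)) = q_N(x, y) + λ((x, 0), (0, g)) + q_F(f, g)` satisfies `λ = q + q*`: the
off-diagonal block is taken once and hermitian symmetry supplies its transpose.
On the free part `F = ℤπ^m` a sesquilinear form is determined by its Gram matrix `L`, and one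
takes for `q_F` the matrix with `L` strictly above the diagonal, `μ(e_i)` on it and `0` below.
Hermitian symmetry handles the entries off the diagonal, and the quadratic refinement provides
the splitting `L_ii = μ(e_i) + conj μ(e_i)` on it.
-/

/-- The involution of the group ring `ℤπ` induced by `g ↦ g⁻¹`. -/
def conjGR (π : Type) [Group π] (x : MonoidAlgebra ℤ π) : MonoidAlgebra ℤ π :=
  MonoidAlgebra.ofCoeff (Finsupp.equivMapDomain (Equiv.inv π) x.coeff)

/-- A pairing `λ : M × M → ℤπ` is sesquilinear if it is biadditive,
left `ℤπ`-linear in the first variable and conjugate-linear in the second. -/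
def IsSesq (π : Type) [Group π] {M : Type} [AddCommGroup M]
    [Module (MonoidAlgebra ℤ π) M] (lam : M → M → MonoidAlgebra ℤ π) : Prop :=
  (∀ x x' y, lam (x + x') y = lam x y + lam x' y) ∧
  (∀ x y y', lam x (y + y') = lam x y + lam x y') ∧
  (∀ (a : MonoidAlgebra ℤ π) (x y), lam (a • x) y = a * lam x y) ∧
  (∀ (a : MonoidAlgebra ℤ π) (x y), lam x (a • y) = lam x y * conjGR π a)

/-- A pairing is hermitian if `λ(x,y) = conj (λ(y,x))`. -/
def IsHermitian (π : Type) [Group π] {M : Type} [AddCommGroup M]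
    [Module (MonoidAlgebra ℤ π) M] (lam : M → M → MonoidAlgebra ℤ π) : Prop :=
  ∀ x y, lam x y = conjGR π (lam y x)

/-- A hermitian form is even if `λ = q + q*` for some sesquilinear `q`. -/
def IsEvenForm (π : Type) [Group π] {M : Type} [AddCommGroup M]
    [Module (MonoidAlgebra ℤ π) M] (lam : M → M → MonoidAlgebra ℤ π) : Prop :=
  ∃ q : M → M → MonoidAlgebra ℤ π, IsSesq π q ∧
    ∀ x y, lam x y = q x y + conjGR π (q y x)

/-- The additive subgroup of `ℤπ` generated by the elements `g - g⁻¹`; the target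
of quadratic refinements is the quotient `ℤπ/{g - g⁻¹}`. -/
noncomputable def oddRel (π : Type) [Group π] : AddSubgroup (MonoidAlgebra ℤ π) :=
  AddSubgroup.closure
    {x | ∃ g : π, x = MonoidAlgebra.of ℤ π g - MonoidAlgebra.of ℤ π g⁻¹}

/-- A quadratic refinement of `λ` is a map `μ : M → ℤπ/{g - g⁻¹}` (given here by
a lift `μ : M → ℤπ`, with the relevant identities holding modulo `{g - g⁻¹}`)
such that `λ(x,x) = μ(x) + conj μ(x)`, `μ(x+y) = μ(x) + μ(y) + [λ(x,y)]` and
`μ(a·x) = a·μ(x)·conj a`. -/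
def HasQuadRef (π : Type) [Group π] {M : Type} [AddCommGroup M]
    [Module (MonoidAlgebra ℤ π) M] (lam : M → M → MonoidAlgebra ℤ π) : Prop :=
  ∃ μ : M → MonoidAlgebra ℤ π,
    (∀ x, lam x x = μ x + conjGR π (μ x)) ∧
    (∀ x y, μ (x + y) - μ x - μ y - lam x y ∈ oddRel π) ∧
    (∀ (a : MonoidAlgebra ℤ π) (x), μ (a • x) - a * μ x * conjGR π a ∈ oddRel π)

section Conjugation

variable {π : Type} [Group π]

lemma conjGR_add (x y : MonoidAlgebra ℤ π) : conjGR π (x + y) = conjGR π x + conjGR π y := by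
  ext a
  exact Finsupp.add_apply x.coeff y.coeff a⁻¹

noncomputable def conjGRAddHom : MonoidAlgebra ℤ π →+ MonoidAlgebra ℤ π :=
  AddMonoidHom.mk' (conjGR π) conjGR_add

lemma conjGR_zero : conjGR π 0 = 0 :=
  map_zero (conjGRAddHom (π := π))

lemma conjGR_sum {ι : Type*} (s : Finset ι) (f : ι → MonoidAlgebra ℤ π) :
    conjGR π (∑ i ∈ s, f i) = ∑ i ∈ s, conjGR π (f i) :=
  map_sum conjGRAddHom f s

lemma conjGR_conjGR (x : MonoidAlgebra ℤ π) : conjGR π (conjGR π x) = x := by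
  ext a
  simp [conjGR]

lemma conjGR_single (g : π) (r : ℤ) :
    conjGR π (MonoidAlgebra.single g r) = MonoidAlgebra.single g⁻¹ r := by
  simp [conjGR, Finsupp.equivMapDomain_single, MonoidAlgebra.ofCoeff_single]

lemma conjGR_mul (x y : MonoidAlgebra ℤ π) : conjGR π (x * y) = conjGR π y * conjGR π x := by
  induction x using MonoidAlgebra.induction_linear with
  | zero => simp [conjGR_zero]
  | add a b ha hb => rw [add_mul, conjGR_add, ha, hb, conjGR_add, mul_add]
  | single g r =>
    induction y using MonoidAlgebra.induction_linear with
    | zero => simp [conjGR_zero]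
    | add a b ha hb => rw [mul_add, conjGR_add, ha, hb, conjGR_add, add_mul]
    | single h s =>
      rw [MonoidAlgebra.single_mul_single, conjGR_single, conjGR_single, conjGR_single,
        MonoidAlgebra.single_mul_single, mul_inv_rev, mul_comm]

end Conjugation

section Pairings

variable {π : Type} [Group π] {M M' : Type} [AddCommGroup M] [Module (MonoidAlgebra ℤ π) M]
  [AddCommGroup M'] [Module (MonoidAlgebra ℤ π) M'] {lam lam' : M → M → MonoidAlgebra ℤ π}

lemma IsSesq.add (h : IsSesq π lam) (h' : IsSesq π lam') :
    IsSesq π fun x y => lam x y + lam' x y :=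
  ⟨fun x x' y => by simp only [h.1, h'.1]; abel, fun x y y' => by simp only [h.2.1, h'.2.1]; abel,
    fun a x y => by simp only [h.2.2.1, h'.2.2.1, mul_add],
    fun a x y => by simp only [h.2.2.2, h'.2.2.2, add_mul]⟩

lemma IsSesq.comp (h : IsSesq π lam) (f g : M' →ₗ[MonoidAlgebra ℤ π] M) :
    IsSesq π fun x y => lam (f x) (g y) :=
  ⟨fun x x' y => by simp only [map_add, h.1], fun x y y' => by simp only [map_add, h.2.1],
    fun a x y => by simp only [map_smul, h.2.2.1], fun a x y => by simp only [map_smul, h.2.2.2]⟩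

lemma IsHermitian.comp (h : IsHermitian π lam) (f : M' → M) :
    IsHermitian π fun x y => lam (f x) (f y) :=
  fun x y => h (f x) (f y)

lemma IsEvenForm.comp (h : IsEvenForm π lam) (f : M' →ₗ[MonoidAlgebra ℤ π] M) :
    IsEvenForm π fun x y => lam (f x) (f y) :=
  let ⟨_, hq, hlam⟩ := h
  ⟨_, hq.comp f f, fun x y => hlam (f x) (f y)⟩

lemma IsSesq.sum_left (h : IsSesq π lam) {ι : Type*} (s : Finset ι) (v : ι → M) (y : M) :
    lam (∑ i ∈ s, v i) y = ∑ i ∈ s, lam (v i) y :=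
  map_sum (AddMonoidHom.mk' (lam · y) fun a b => h.1 a b y) v s

lemma IsSesq.sum_right (h : IsSesq π lam) {ι : Type*} (s : Finset ι) (x : M) (v : ι → M) :
    lam x (∑ i ∈ s, v i) = ∑ i ∈ s, lam x (v i) :=
  map_sum (AddMonoidHom.mk' (lam x) (h.2.1 x)) v s

end Pairings

section Prod

variable {π : Type} [Group π] {N P : Type} [AddCommGroup N] [Module (MonoidAlgebra ℤ π) N]
  [AddCommGroup P] [Module (MonoidAlgebra ℤ π) P] {lam : N × P → N × P → MonoidAlgebra ℤ π}

lemma IsSesq.apply_prod (hs : IsSesq π lam) (x y : N × P) :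
    lam x y = lam (x.1, 0) (y.1, 0) + lam (x.1, 0) (0, y.2) +
      lam (0, x.2) (y.1, 0) + lam (0, x.2) (0, y.2) := by
  have split (z : N × P) : z = (z.1, 0) + (0, z.2) := by simp
  conv_lhs => rw [split x, split y]
  rw [hs.1, hs.2.1, hs.2.1, ← add_assoc]

theorem IsSesq.isEvenForm_of_prod (hs : IsSesq π lam) (hh : IsHermitian π lam)
    (hN : IsEvenForm π fun x y : N => lam (x, 0) (y, 0))
    (hP : IsEvenForm π fun x y : P => lam (0, x) (0, y)) : IsEvenForm π lam := by
  obtain ⟨qN, hqN, hN⟩ := hN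
  obtain ⟨qP, hqP, hP⟩ := hP
  dsimp only at hN hP
  let R := MonoidAlgebra ℤ π
  refine ⟨fun x y => qN x.1 y.1 + lam (x.1, 0) (0, y.2) + qP x.2 y.2, ?_, fun x y => ?_⟩
  · exact ((hqN.comp (LinearMap.fst R N P) (LinearMap.fst R N P)).add
      (hs.comp (LinearMap.inl R N P ∘ₗ LinearMap.fst R N P)
        (LinearMap.inr R N P ∘ₗ LinearMap.snd R N P))).add
      (hqP.comp (LinearMap.snd R N P) (LinearMap.snd R N P))
  · dsimp only
    rw [hs.apply_prod, hN, hP, hh (0, x.2), conjGR_add, conjGR_add]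
    abel

end Prod

section Matrix

variable {π : Type} [Group π] {ι : Type}

lemma exists_add_conjGR_transpose_eq [LinearOrder ι] (L : Matrix ι ι (MonoidAlgebra ℤ π))
    (hL : ∀ i j, L i j = conjGR π (L j i)) (hdiag : ∀ i, ∃ a, L i i = a + conjGR π a) :
    ∃ c : Matrix ι ι (MonoidAlgebra ℤ π), ∀ i j, c i j + conjGR π (c j i) = L i j := by
  choose a ha using hdiag
  refine ⟨fun i j => if i < j then L i j else if i = j then a i else 0, fun i j => ?_⟩
  rcases lt_trichotomy i j with hij | rfl | hij
  · simp [hij, hij.not_gt, hij.ne', conjGR_zero]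
  · simp [ha]
  · simp [hij, hij.not_gt, hij.ne', ← hL]

variable [Fintype ι]

noncomputable def sesqOfMatrix (c : Matrix ι ι (MonoidAlgebra ℤ π))
    (f g : ι → MonoidAlgebra ℤ π) : MonoidAlgebra ℤ π :=
  ∑ i, ∑ j, f i * c i j * conjGR π (g j)

lemma isSesq_sesqOfMatrix (c : Matrix ι ι (MonoidAlgebra ℤ π)) : IsSesq π (sesqOfMatrix c) := by
  refine ⟨fun f f' g => ?_, fun f g g' => ?_, fun a f g => ?_, fun a f g => ?_⟩ <;>
    simp only [sesqOfMatrix, Pi.add_apply, Pi.smul_apply, smul_eq_mul]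
  · simp only [add_mul, Finset.sum_add_distrib]
  · simp only [conjGR_add, mul_add, Finset.sum_add_distrib]
  · simp only [Finset.mul_sum, mul_assoc]
  · simp only [conjGR_mul, Finset.sum_mul, mul_assoc]

lemma sesqOfMatrix_add_conjGR (c : Matrix ι ι (MonoidAlgebra ℤ π)) (f g : ι → MonoidAlgebra ℤ π) :
    sesqOfMatrix c f g + conjGR π (sesqOfMatrix c g f) =
      sesqOfMatrix (fun i j => c i j + conjGR π (c j i)) f g := by
  simp only [sesqOfMatrix, conjGR_sum, conjGR_mul, conjGR_conjGR, mul_add, add_mul,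
    Finset.sum_add_distrib]
  rw [Finset.sum_comm (s := Finset.univ) (t := Finset.univ) (f := fun i j => f j * _)]
  simp only [mul_assoc]

lemma IsSesq.eq_sesqOfMatrix [DecidableEq ι]
    {lam : (ι → MonoidAlgebra ℤ π) → (ι → MonoidAlgebra ℤ π) → MonoidAlgebra ℤ π}
    (hs : IsSesq π lam) (f g : ι → MonoidAlgebra ℤ π) :
    lam f g = sesqOfMatrix (fun i j => lam (Pi.single i 1) (Pi.single j 1)) f g := by
  conv_lhs => rw [pi_eq_sum_univ' f, pi_eq_sum_univ' g]
  simp only [hs.sum_left, hs.sum_right, hs.2.2.1, hs.2.2.2, sesqOfMatrix, mul_assoc]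

theorem isEvenForm_of_diag_eq_add_conjGR [LinearOrder ι]
    {lam : (ι → MonoidAlgebra ℤ π) → (ι → MonoidAlgebra ℤ π) → MonoidAlgebra ℤ π}
    (hs : IsSesq π lam) (hh : IsHermitian π lam)
    (hdiag : ∀ i, ∃ a, lam (Pi.single i 1) (Pi.single i 1) = a + conjGR π a) :
    IsEvenForm π lam := by
  obtain ⟨c, hc⟩ := exists_add_conjGR_transpose_eq
    (fun i j => lam (Pi.single i 1) (Pi.single j 1)) (fun i j => hh _ _) hdiag
  refine ⟨sesqOfMatrix c, isSesq_sesqOfMatrix c, fun f g => ?_⟩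
  simp only [sesqOfMatrix_add_conjGR, hc, hs.eq_sesqOfMatrix f g]

end Matrix

/-- For a quadratic form `(λ, μ)` on `N ⊕ F` with `F` finitely generated free,
`λ` is even if and only if its restriction to `N` is even. -/
theorem even_iff_restriction_even (π : Type) [Group π]
    (N : Type) [AddCommGroup N] [Module (MonoidAlgebra ℤ π) N] (m : ℕ)
    (lam : (N × (Fin m → MonoidAlgebra ℤ π)) → (N × (Fin m → MonoidAlgebra ℤ π)) →
      MonoidAlgebra ℤ π)
    (hs : IsSesq π lam) (hh : IsHermitian π lam) (hq : HasQuadRef π lam) :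
    IsEvenForm π lam ↔ IsEvenForm π (fun x y : N => lam (x, 0) (y, 0)) := by
  let R := MonoidAlgebra ℤ π
  let F := Fin m → R
  refine ⟨fun h => h.comp (LinearMap.inl R N F), fun hN => ?_⟩
  obtain ⟨μ, hμ, -, -⟩ := hq
  refine hs.isEvenForm_of_prod hh hN (isEvenForm_of_diag_eq_add_conjGR
    (hs.comp (LinearMap.inr R N F) (LinearMap.inr R N F)) (hh.comp _)
    fun i => ⟨μ (0, Pi.single i 1), hμ _⟩)
end
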